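/- Let S(t) = ∑_{n≥0} tⁿ/(2n+1)! ∈ ℂ[[t]] (so that S(x²) is the formal series sinh(x)/x). There is a unique formal power series f^I ∈ ℂ[[λ,μ]] satisfying (1 + λμ·f^I(λ,μ)) · S(λ² + λμ + μ²) = S((λ+μ)²) in ℂ[[λ,μ]]; moreover f^I is symmetric (f^I(λ,μ) = f^I(μ,λ)), even (f^I(λ,μ) = f^I(−λ,−μ)), and satisfies equation (1.5b). -/

import Mathlib

noncomputable section

open Finset MvPowerSeries

/-- Total degree of a monomial in two variables. -/
def deg (d : Fin 2 →₀ ℕ) : ℕ := d 0 + d 1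

/-- Formal substitution `f(p, q)` of two polynomials `p`, `q` with zero constant term
for the variables of a two-variable formal power series `f`: the coefficient of a
monomial `d` in `f(p,q)` is `∑_{i,j} (coeff of λ^i μ^j in f) ⬝ (coeff of d in pⁱ·qʲ)`,
a finite sum since `coeff d (pⁱ·qʲ) = 0` whenever `i + j > deg d`. -/
def sub2 (p q : MvPolynomial (Fin 2) ℂ) (f : MvPowerSeries (Fin 2) ℂ) :
    MvPowerSeries (Fin 2) ℂ :=
  fun d => ∑ ij ∈ Finset.range (deg d + 1) ×ˢ Finset.range (deg d + 1),
    MvPowerSeries.coeff (Finsupp.single (0 : Fin 2) ij.1 + Finsupp.single 1 ij.2) f *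
      MvPolynomial.coeff d (p ^ ij.1 * q ^ ij.2)

/-- The formal exponential `exp g = ∑ₖ gᵏ/k!` of a two-variable formal power series `g`
with zero constant term. -/
def expMv (g : MvPowerSeries (Fin 2) ℂ) : MvPowerSeries (Fin 2) ℂ :=
  fun d => ∑ k ∈ Finset.range (deg d + 1), MvPowerSeries.coeff d (g ^ k) / (k.factorial : ℂ)

/-- `f(μ, −λ−μ)`. -/
def s₁ (f : MvPowerSeries (Fin 2) ℂ) : MvPowerSeries (Fin 2) ℂ :=
  sub2 (MvPolynomial.X 1) (-MvPolynomial.X 0 - MvPolynomial.X 1) f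

/-- `f(λ, −λ−μ)`. -/
def s₂ (f : MvPowerSeries (Fin 2) ℂ) : MvPowerSeries (Fin 2) ℂ :=
  sub2 (MvPolynomial.X 0) (-MvPolynomial.X 0 - MvPolynomial.X 1) f

/-- `f(μ, λ)`. -/
def swapS (f : MvPowerSeries (Fin 2) ℂ) : MvPowerSeries (Fin 2) ℂ :=
  sub2 (MvPolynomial.X 1) (MvPolynomial.X 0) f

/-- `f(−λ, −μ)`. -/
def negS (f : MvPowerSeries (Fin 2) ℂ) : MvPowerSeries (Fin 2) ℂ :=
  sub2 (-MvPolynomial.X 0) (-MvPolynomial.X 1) f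

/-- Equation (1.5b), the compressed hexagon equation:
`λμ(λ+μ)·( f(λ,μ) + e^{μ}·f(μ,−λ−μ) + e^{−λ}·f(λ,−λ−μ) ) = λ(e^{μ} − 1) + μ(e^{−λ} − 1)`. -/
def Eq15b (f : MvPowerSeries (Fin 2) ℂ) : Prop :=
  (X 0 : MvPowerSeries (Fin 2) ℂ) * X 1 * (X 0 + X 1) *
      (f + expMv (X 1) * s₁ f + expMv (-X 0) * s₂ f)
    = X 0 * (expMv (X 1) - 1) + X 1 * (expMv (-X 0) - 1)

/-- `S(p)` where `S(t) = ∑ₙ tⁿ/(2n+1)!` and `p` is a polynomial with zero constant term: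
the coefficient of a monomial `d` is the (finite) sum `∑ₙ (1/(2n+1)!) ⬝ coeff d (pⁿ)`. -/
def Sser (p : MvPolynomial (Fin 2) ℂ) : MvPowerSeries (Fin 2) ℂ :=
  fun d => ∑ n ∈ Finset.range (deg d + 1),
    (1 / ((2 * n + 1).factorial : ℂ)) * MvPolynomial.coeff d (p ^ n)

/-!
Write `A = S(λ² + λμ + μ²)` and `B = S((λ + μ)²)`. Since `A` has constant coefficient `1` and
`B - A` vanishes both at `λ = 0` and at `μ = 0`, `λμ` divides `B - A` and
`f^I = (B - A) / (λμ A)`; it is unique because `ℂ[[λ,μ]]` is a domain. A substitution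
`(λ, μ) ↦ (a, b)` carries the defining equation to `(1 + ab f(a,b)) S(a² + ab + b²) = S((a + b)²)`.
The substitutions `(μ, λ)` and `(-λ, -μ)` fix `λμ`, `A` and `B`, so uniqueness makes `f^I`
symmetric and even. The substitutions `(μ, -λ-μ)` and `(λ, -λ-μ)` fix `A` and send `B` to `S(λ²)`
and `S(μ²)`; combined with `2x S(x²) = eˣ - e⁻ˣ` and `e^{x+y} = eˣ e^y`, these give (1.5b) after
cancelling `A`.
-/

namespace MvPowerSeries

variable {σ τ R : Type*} [CommRing R]

theorem coeff_pow_mul_pow_eq_zero_of_degree_lt {f g : MvPowerSeries σ R}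
    (hf : constantCoeff f = 0) (hg : constantCoeff g = 0) {d : σ →₀ ℕ} {i j : ℕ}
    (h : d.degree < i + j) : coeff d (f ^ i * g ^ j) = 0 := by
  apply coeff_of_lt_order
  calc (d.degree : ℕ∞) < i + j := by exact_mod_cast h
    _ ≤ (f ^ i).order + (g ^ j).order :=
      add_le_add (le_order_pow_of_constantCoeff_eq_zero i hf)
        (le_order_pow_of_constantCoeff_eq_zero j hg)
    _ ≤ (f ^ i * g ^ j).order := le_order_mul

theorem coeff_pow_eq_zero_of_degree_lt {f : MvPowerSeries σ R} (hf : constantCoeff f = 0)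
    {d : σ →₀ ℕ} {n : ℕ} (h : d.degree < n) : coeff d (f ^ n) = 0 := by
  simpa using coeff_pow_mul_pow_eq_zero_of_degree_lt hf hf (j := 0) h

theorem subst_powerSeries_subst {a : MvPowerSeries σ R} (ha : PowerSeries.HasSubst a)
    {b : σ → MvPowerSeries τ R} (hb : HasSubst b) (c : PowerSeries R) :
    subst b (c.subst a) = c.subst (subst b a) :=
  subst_comp_subst_apply ha.const hb c

theorem X_dvd_of_subst_update_eq_zero [DecidableEq σ] {g : MvPowerSeries σ R} {s : σ}
    (h : subst (Function.update (X : σ → MvPowerSeries σ R) s 0) g = 0) : X s ∣ g := by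
  have hX : Function.update (X : σ → MvPowerSeries σ R) s 0
      = Function.update (1 : σ → R) s 0 • X := by
    ext1 i
    rcases eq_or_ne i s with rfl | hi <;> simp [*]
  rw [hX, ← rescale_eq_subst] at h
  refine X_dvd_iff.2 fun m hm => ?_
  have hprod : (m.prod fun i k => Function.update (1 : σ → R) s 0 i ^ k) = 1 :=
    prod_eq_one fun i hi => by
      show Function.update (1 : σ → R) s 0 i ^ m i = 1
      rw [Function.update_of_ne (by rintro rfl; exact Finsupp.mem_support_iff.1 hi hm),
        Pi.one_apply, one_pow]
  simpa [coeff_rescale, hprod] using congrArg (coeff m) h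

theorem X_mul_X_dvd {g : MvPowerSeries σ R} {s t : σ} (hst : s ≠ t) (hs : X s ∣ g)
    (ht : X t ∣ g) : X s * X t ∣ g := by
  classical
  obtain ⟨h, rfl⟩ := hs
  refine mul_dvd_mul_left _ (X_dvd_iff.2 fun m hm => ?_)
  have := X_dvd_iff.1 ht (Finsupp.single s 1 + m) (by simp [hst, hm])
  rwa [X_def, coeff_add_monomial_mul, one_mul] at this

end MvPowerSeries

namespace MvPolynomial

variable {σ R : Type*} [CommRing R]

@[simp, norm_cast]
theorem coe_neg (p : MvPolynomial σ R) : ((-p : MvPolynomial σ R) : MvPowerSeries σ R) = -p :=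
  map_neg coeToMvPowerSeries.ringHom p

@[simp, norm_cast]
theorem coe_sub (p q : MvPolynomial σ R) :
    ((p - q : MvPolynomial σ R) : MvPowerSeries σ R) = p - q :=
  map_sub coeToMvPowerSeries.ringHom p q

end MvPolynomial

namespace PowerSeries

variable {σ : Type*}

theorem coeff_subst_eq_sum_range {R : Type*} [CommRing R] (c : PowerSeries R)
    {g : MvPowerSeries σ R} (hg : MvPowerSeries.constantCoeff g = 0) (d : σ →₀ ℕ) :
    MvPowerSeries.coeff d (c.subst g)
      = ∑ n ∈ range (d.degree + 1), coeff n c * MvPowerSeries.coeff d (g ^ n) := by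
  rw [coeff_subst (.of_constantCoeff_zero hg)]
  refine finsum_eq_sum_of_support_subset _ fun n hn => ?_
  rw [coe_range, Set.mem_Iio, Nat.lt_succ_iff]
  by_contra h
  exact hn (show coeff n c • _ = 0 by
    rw [MvPowerSeries.coeff_pow_eq_zero_of_degree_lt hg (not_le.1 h), smul_zero])

section ExpAdd

variable {A : Type*} [CommRing A] [Algebra ℚ A]

theorem exp_subst_X_zero_add_X_one :
    (exp A).subst (MvPowerSeries.X 0 + MvPowerSeries.X 1 : MvPowerSeries (Fin 2) A)
      = (exp A).subst (MvPowerSeries.X 0) * (exp A).subst (MvPowerSeries.X 1) := by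
  ext e
  rw [coeff_subst_X_zero_add_X_one, coeff_subst_X_zero_subst_mul_X_one]
  simp only [coeff_exp, ← map_natCast (algebraMap ℚ A), ← map_mul]
  congr 1
  have := Nat.choose_mul_factorial_mul_factorial (Nat.le_add_right (e 0) (e 1))
  rw [Nat.add_sub_cancel_left] at this
  field_simp
  exact_mod_cast this

theorem exp_subst_add {a b : MvPowerSeries σ A} (ha : MvPowerSeries.constantCoeff a = 0)
    (hb : MvPowerSeries.constantCoeff b = 0) :
    (exp A).subst (a + b) = (exp A).subst a * (exp A).subst b := by
  have hab : MvPowerSeries.HasSubst ![a, b] :=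
    MvPowerSeries.hasSubst_of_constantCoeff_zero fun i => by fin_cases i <;> assumption
  have h := congrArg (MvPowerSeries.subst ![a, b]) (exp_subst_X_zero_add_X_one (A := A))
  rwa [MvPowerSeries.subst_mul hab, MvPowerSeries.subst_powerSeries_subst (.X 0) hab,
    MvPowerSeries.subst_powerSeries_subst (.X 1) hab,
    MvPowerSeries.subst_powerSeries_subst ((HasSubst.X 0).add (.X 1)) hab,
    MvPowerSeries.subst_add hab, MvPowerSeries.subst_X hab, MvPowerSeries.subst_X hab] at h

end ExpAdd

/-- The series `S` of the statement: `S(t²) = sinh t / t`. -/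
def sinhc : PowerSeries ℂ := PowerSeries.mk fun n => 1 / ((2 * n + 1).factorial : ℂ)

theorem two_mul_X_mul_sinhc_subst :
    2 * X * sinhc.subst (X ^ 2 : PowerSeries ℂ) = exp ℂ - rescale (-1) (exp ℂ) := by
  ext n
  rcases n with _ | k
  · rw [map_sub, coeff_rescale]
    simp
  rw [mul_assoc, ← map_ofNat C, coeff_C_mul, coeff_succ_X_mul, coeff_subst_X_pow two_ne_zero]
  simp [sinhc, coeff_exp, coeff_rescale]
  rcases Nat.even_or_odd k with ⟨j, rfl⟩ | ⟨j, rfl⟩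
  · rw [← two_mul, if_pos (dvd_mul_right 2 j), Nat.mul_div_cancel_left j two_pos,
      (odd_two_mul_add_one j).neg_one_pow]
    ring
  · rw [if_neg (by omega), show 2 * j + 1 + 1 = 2 * (j + 1) by ring,
      (even_two_mul _).neg_one_pow]
    ring

theorem two_mul_mul_sinhc_subst {g : MvPowerSeries σ ℂ}
    (hg : MvPowerSeries.constantCoeff g = 0) :
    2 * g * sinhc.subst (g ^ 2) = (exp ℂ).subst g - (exp ℂ).subst (-g) := by
  have hg' : HasSubst g := .of_constantCoeff_zero hg
  have h := congrArg (subst g) two_mul_X_mul_sinhc_subst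
  rw [rescale_eq_subst, subst_sub hg', subst_mul hg', subst_mul hg',
    subst_comp_subst_apply (.of_constantCoeff_zero' (by simp)) hg',
    subst_comp_subst_apply (.smul_X' _) hg'] at h
  have h2 : subst g (2 : ℂ⟦X⟧) = 2 := by rw [← map_ofNat C 2, subst_C, map_ofNat]
  have hneg : subst g (-X : ℂ⟦X⟧) = -g := by
    rw [← coe_substAlgHom hg', map_neg, coe_substAlgHom, subst_X hg']
  simpa [h2, hneg, subst_X hg', subst_pow hg'] using h

theorem add_mul_sinhc_subst {g h : MvPowerSeries σ ℂ} (hg : MvPowerSeries.constantCoeff g = 0)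
    (hh : MvPowerSeries.constantCoeff h = 0) :
    (g + h) * sinhc.subst ((g + h) ^ 2)
      = (exp ℂ).subst h * (g * sinhc.subst (g ^ 2))
        + (exp ℂ).subst (-g) * (h * sinhc.subst (h ^ 2)) := by
  have hsum := two_mul_mul_sinhc_subst (g := g + h) (by simp [hg, hh])
  have hg₂ := two_mul_mul_sinhc_subst hg
  have hh₂ := two_mul_mul_sinhc_subst hh
  have hadd := exp_subst_add hg hh
  have hneg := exp_subst_add (a := -g) (b := -h) (by simp [hg]) (by simp [hh])
  rw [← neg_add] at hneg
  have h2 : (2 : MvPowerSeries σ ℂ) ≠ 0 := fun h => by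
    simpa [map_ofNat MvPowerSeries.constantCoeff 2] using congrArg MvPowerSeries.constantCoeff h
  refine mul_left_cancel₀ h2 ?_
  linear_combination hsum + hadd - hneg - (exp ℂ).subst h * hg₂ - (exp ℂ).subst (-g) * hh₂

theorem constantCoeff_sinhc_subst {g : MvPowerSeries σ ℂ}
    (hg : MvPowerSeries.constantCoeff g = 0) :
    MvPowerSeries.constantCoeff (sinhc.subst g) = 1 := by
  rw [← MvPowerSeries.coeff_zero_eq_constantCoeff_apply, coeff_subst_eq_sum_range _ hg]
  simp [sinhc]

theorem sinhc_subst_ne_zero {g : MvPowerSeries σ ℂ} (hg : MvPowerSeries.constantCoeff g = 0) :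
    sinhc.subst g ≠ 0 := fun h => by
  simpa [h] using constantCoeff_sinhc_subst hg

end PowerSeries

open PowerSeries (exp sinhc)

theorem deg_eq_degree (d : Fin 2 →₀ ℕ) : deg d = d.degree := by
  rw [deg, Finsupp.degree_eq_sum, Fin.sum_univ_two]

theorem Sser_eq_subst {r : MvPolynomial (Fin 2) ℂ}
    (hr : constantCoeff (r : MvPowerSeries (Fin 2) ℂ) = 0) :
    Sser r = sinhc.subst (r : MvPowerSeries (Fin 2) ℂ) := by
  ext d
  rw [PowerSeries.coeff_subst_eq_sum_range _ hr, ← deg_eq_degree]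
  simp only [sinhc, PowerSeries.coeff_mk, ← MvPolynomial.coe_pow, MvPolynomial.coeff_coe]
  rfl

theorem expMv_eq_subst {g : MvPowerSeries (Fin 2) ℂ} (hg : constantCoeff g = 0) :
    expMv g = (exp ℂ).subst g := by
  ext d
  rw [PowerSeries.coeff_subst_eq_sum_range _ hg, ← deg_eq_degree]
  simp [expMv, MvPowerSeries.coeff_apply, PowerSeries.coeff_exp, div_eq_inv_mul]

theorem sub2_eq_subst {p q : MvPolynomial (Fin 2) ℂ}
    (hp : constantCoeff (p : MvPowerSeries (Fin 2) ℂ) = 0)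
    (hq : constantCoeff (q : MvPowerSeries (Fin 2) ℂ) = 0) (f : MvPowerSeries (Fin 2) ℂ) :
    sub2 p q f = MvPowerSeries.subst ![(p : MvPowerSeries (Fin 2) ℂ), q] f := by
  ext d
  have hpq : HasSubst ![(p : MvPowerSeries (Fin 2) ℂ), q] :=
    hasSubst_of_constantCoeff_zero fun i => by fin_cases i <;> assumption
  have hmon (i j : ℕ) :
      Finsupp.equivFunOnFinite.symm ![i, j] = Finsupp.single 0 i + Finsupp.single 1 j := by
    ext k; fin_cases k <;> simp
  rw [MvPowerSeries.coeff_apply, coeff_subst hpq, ← finsum_comp_equiv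
      (Finsupp.equivFunOnFinite.trans (finTwoArrowEquiv ℕ)).symm,
    finsum_eq_sum_of_support_subset (s := range (deg d + 1) ×ˢ range (deg d + 1))]
  · refine sum_congr rfl fun ij _ => ?_
    simp [Finsupp.prod_fintype, hmon, ← MvPolynomial.coe_pow, ← MvPolynomial.coe_mul]
  · rintro ⟨i, j⟩ hij
    simp only [coe_product, coe_range, Set.mem_prod, Set.mem_Iio, Nat.lt_succ_iff]
    by_contra h
    refine hij ?_
    have hd : d.degree < i + j := by rw [← deg_eq_degree]; omega
    simp [Finsupp.prod_fintype, coeff_pow_mul_pow_eq_zero_of_degree_lt hp hq hd]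

def IsFirstSeries (f : MvPowerSeries (Fin 2) ℂ) : Prop :=
  (1 + X 0 * X 1 * f) * sinhc.subst (X 0 ^ 2 + X 0 * X 1 + X 1 ^ 2 : MvPowerSeries (Fin 2) ℂ)
    = sinhc.subst ((X 0 + X 1) ^ 2 : MvPowerSeries (Fin 2) ℂ)

theorem isFirstSeries_iff (f : MvPowerSeries (Fin 2) ℂ) :
    IsFirstSeries f ↔ (1 + X 0 * X 1 * f) *
          Sser (MvPolynomial.X 0 ^ 2 + MvPolynomial.X 0 * MvPolynomial.X 1
            + MvPolynomial.X 1 ^ 2)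
        = Sser ((MvPolynomial.X 0 + MvPolynomial.X 1) ^ 2) := by
  rw [Sser_eq_subst (by simp), Sser_eq_subst (by simp)]
  push_cast
  rfl

theorem exists_isFirstSeries : ∃ f, IsFirstSeries f := by
  set A := sinhc.subst (X 0 ^ 2 + X 0 * X 1 + X 1 ^ 2 : MvPowerSeries (Fin 2) ℂ) with hA
  set B := sinhc.subst ((X 0 + X 1) ^ 2 : MvPowerSeries (Fin 2) ℂ) with hB
  have hvanish (s : Fin 2) :
      MvPowerSeries.subst (Function.update (X : Fin 2 → MvPowerSeries (Fin 2) ℂ) s 0) (B - A)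
        = 0 := by
    have ha : HasSubst (Function.update (X : Fin 2 → MvPowerSeries (Fin 2) ℂ) s 0) :=
      hasSubst_of_constantCoeff_zero fun i => by rcases eq_or_ne i s with rfl | hi <;> simp [*]
    rw [subst_sub ha, hA, hB, subst_powerSeries_subst (.of_constantCoeff_zero (by simp)) ha,
      subst_powerSeries_subst (.of_constantCoeff_zero (by simp)) ha, sub_eq_zero,
      ← coe_substAlgHom ha]
    simp only [map_add, map_mul, map_pow, substAlgHom_X]
    fin_cases s <;> simp
  obtain ⟨h, hh⟩ := X_mul_X_dvd zero_ne_one (X_dvd_of_subst_update_eq_zero (hvanish 0))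
    (X_dvd_of_subst_update_eq_zero (hvanish 1))
  have hA₀ : constantCoeff A ≠ 0 := by
    rw [PowerSeries.constantCoeff_sinhc_subst (by simp)]
    exact one_ne_zero
  refine ⟨A⁻¹ * h, ?_⟩
  calc (1 + X 0 * X 1 * (A⁻¹ * h)) * A = A + X 0 * X 1 * h * (A⁻¹ * A) := by ring
    _ = B := by rw [← hh, MvPowerSeries.inv_mul_cancel _ hA₀]; ring

namespace IsFirstSeries

variable {f : MvPowerSeries (Fin 2) ℂ}

theorem subst (hf : IsFirstSeries f) {a : Fin 2 → MvPowerSeries (Fin 2) ℂ} (ha : HasSubst a) :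
    (1 + a 0 * a 1 * MvPowerSeries.subst a f) * sinhc.subst (a 0 ^ 2 + a 0 * a 1 + a 1 ^ 2)
      = sinhc.subst ((a 0 + a 1) ^ 2) := by
  have h := congrArg (MvPowerSeries.subst a) hf
  rw [subst_mul ha, subst_powerSeries_subst (.of_constantCoeff_zero (by simp)) ha,
    subst_powerSeries_subst (.of_constantCoeff_zero (by simp)) ha] at h
  simp only [← coe_substAlgHom ha, map_add, map_mul, map_one, map_pow, substAlgHom_X] at h
  rwa [coe_substAlgHom] at h

theorem unique {g : MvPowerSeries (Fin 2) ℂ} (hf : IsFirstSeries f) (hg : IsFirstSeries g) :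
    f = g := by
  have hX (s : Fin 2) : (X s : MvPowerSeries (Fin 2) ℂ) ≠ 0 := fun h => by
    simpa using congrArg (coeff (Finsupp.single s 1)) h
  exact mul_left_cancel₀ (mul_ne_zero (hX 0) (hX 1))
    (add_left_cancel (mul_right_cancel₀ (PowerSeries.sinhc_subst_ne_zero (by simp))
      (hf.trans hg.symm)))

theorem subst_eq_self (hf : IsFirstSeries f) {a : Fin 2 → MvPowerSeries (Fin 2) ℂ}
    (ha : HasSubst a) (h₁ : a 0 * a 1 = X 0 * X 1)
    (h₂ : a 0 ^ 2 + a 0 * a 1 + a 1 ^ 2 = X 0 ^ 2 + X 0 * X 1 + X 1 ^ 2)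
    (h₃ : (a 0 + a 1) ^ 2 = (X 0 + X 1) ^ 2) : MvPowerSeries.subst a f = f := by
  have h := hf.subst ha
  rw [h₂, h₃, h₁] at h
  exact unique h hf

theorem subst_swap (hf : IsFirstSeries f) : MvPowerSeries.subst ![X 1, X 0] f = f :=
  hf.subst_eq_self .X_X (by simp [mul_comm]) (by simp; ring) (by simp [add_comm])

theorem subst_neg (hf : IsFirstSeries f) : MvPowerSeries.subst ![-X 0, -X 1] f = f :=
  hf.subst_eq_self (hasSubst_of_constantCoeff_zero fun i => by fin_cases i <;> simp)
    (by simp) (by simp) (by simp; ring)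

theorem hexagon (hf : IsFirstSeries f) :
    X 0 * X 1 * (X 0 + X 1) * (f
        + (exp ℂ).subst (X 1) * MvPowerSeries.subst ![X 1, -X 0 - X 1] f
        + (exp ℂ).subst (-X 0) * MvPowerSeries.subst ![X 0, -X 0 - X 1] f)
      = X 0 * ((exp ℂ).subst (X 1) - 1) + X 1 * ((exp ℂ).subst (-X 0) - 1) := by
  have ha (i : Fin 2) : HasSubst ![(X i : MvPowerSeries (Fin 2) ℂ), -X 0 - X 1] :=
    hasSubst_of_constantCoeff_zero fun j => by fin_cases j <;> simp
  have h₀ := hf.subst (ha 0)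
  have h₁ := hf.subst (ha 1)
  have hsinh := PowerSeries.add_mul_sinhc_subst (g := (X 0 : MvPowerSeries (Fin 2) ℂ))
    (h := X 1) (by simp) (by simp)
  simp only [Matrix.cons_val_zero, Matrix.cons_val_one] at h₀ h₁
  rw [IsFirstSeries] at hf
  set x : MvPowerSeries (Fin 2) ℂ := X 0
  set y : MvPowerSeries (Fin 2) ℂ := X 1
  rw [show x ^ 2 + x * (-x - y) + (-x - y) ^ 2 = x ^ 2 + x * y + y ^ 2 by ring,
    show (x + (-x - y)) ^ 2 = y ^ 2 by ring] at h₀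
  rw [show y ^ 2 + y * (-x - y) + (-x - y) ^ 2 = x ^ 2 + x * y + y ^ 2 by ring,
    show (y + (-x - y)) ^ 2 = x ^ 2 by ring] at h₁
  refine mul_right_cancel₀ (PowerSeries.sinhc_subst_ne_zero (g := x ^ 2 + x * y + y ^ 2)
    (by simp [x, y])) ?_
  linear_combination
    (x + y) * hf - x * (exp ℂ).subst y * h₁ - y * (exp ℂ).subst (-x) * h₀ + hsinh

end IsFirstSeries

/-- Corollary 1.6a: there is a unique `f^I` with
`(1 + λμ·f^I)·S(λ²+λμ+μ²) = S((λ+μ)²)`; it is symmetric, even, and satisfies (1.5b). -/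
theorem first_series_assoc :
    (∃! f : MvPowerSeries (Fin 2) ℂ,
      (1 + X 0 * X 1 * f) *
          Sser (MvPolynomial.X 0 ^ 2 + MvPolynomial.X 0 * MvPolynomial.X 1
            + MvPolynomial.X 1 ^ 2)
        = Sser ((MvPolynomial.X 0 + MvPolynomial.X 1) ^ 2)) ∧
    (∀ f : MvPowerSeries (Fin 2) ℂ,
      (1 + X 0 * X 1 * f) *
          Sser (MvPolynomial.X 0 ^ 2 + MvPolynomial.X 0 * MvPolynomial.X 1
            + MvPolynomial.X 1 ^ 2)
        = Sser ((MvPolynomial.X 0 + MvPolynomial.X 1) ^ 2) →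
      swapS f = f ∧ negS f = f ∧ Eq15b f) := by
  simp only [← isFirstSeries_iff]
  obtain ⟨f₀, hf₀⟩ := exists_isFirstSeries
  refine ⟨⟨f₀, hf₀, fun g hg => hg.unique hf₀⟩, fun f hf => ⟨?_, ?_, ?_⟩⟩
  · rw [swapS, sub2_eq_subst (by simp) (by simp)]
    simpa using hf.subst_swap
  · rw [negS, sub2_eq_subst (by simp) (by simp)]
    simpa using hf.subst_neg
  · rw [Eq15b, s₁, s₂, sub2_eq_subst (by simp) (by simp), sub2_eq_subst (by simp) (by simp),
      expMv_eq_subst (by simp), expMv_eq_subst (by simp)]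
    simpa using hf.hexagon
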